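/- Let γ = (p₀, c₀, p₁, c₁, …, c_{l−1}, p_l, c_l, p_{l+1}) be a gallery in a building X which has the type of a minimal gallery. Then γ is minimal if and only if for all 1 ≤ j ≤ l, one has c_{j−1} = gate_{c₀}(p_j) and c_j ≠ c_{j−1}. -/

import Mathlib

/-- A building of type `(W,S)`, encoded by its Weyl-distance function `δ` on the set `C` of
alcoves (chambers), where `(W,S)` is presented by the Coxeter system `cs`. -/
structure IsWeylBuilding {C B W : Type*} [Group W] {M : CoxeterMatrix B}
    (cs : CoxeterSystem M W) (δ : C → C → W) : Prop where
  eq_one_iff : ∀ c d, δ c d = 1 ↔ c = d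
  symm : ∀ c d, δ d c = (δ c d)⁻¹
  step : ∀ (c d e : C) (i : B), δ d e = cs.simple i →
    δ c e = δ c d * cs.simple i ∨ δ c e = δ c d
  step_reduced : ∀ (c d e : C) (i : B), δ d e = cs.simple i →
    cs.length (δ c d * cs.simple i) = cs.length (δ c d) + 1 →
    δ c e = δ c d * cs.simple i
  exists_adj : ∀ (c d : C) (i : B), ∃ e, δ d e = cs.simple i ∧ δ c e = δ c d * cs.simple i

/-!
Along a gallery `c₀, …, c_l` the length `ℓ(δ(c₀, c_j))` grows by at most one per step, so it
reaches `l` at the end exactly when it equals `j` at every step. Then no step stutters, and the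
step from `c_{j-1}` through `p_j` goes up, so `s_{i_j}` is an ascent of `δ(c₀, c_{j-1})` and
no alcove on `p_j` is closer to `c₀` than `c_{j-1}`. Conversely, without stuttering the Weyl
distances `δ(c₀, c_j)` are the prefixes `s_{i_1} ⋯ s_{i_j}` of the reduced word, each step
being length-increasing, so `ℓ(δ(c₀, c_l)) = l`.
-/

theorem Fin.apply_eq_val_of_le_add_one {l : ℕ} (f : Fin (l + 1) → ℕ) (h0 : f 0 = 0)
    (hstep : ∀ j : Fin l, f j.succ ≤ f j.castSucc + 1) (hlast : f (Fin.last l) = l)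
    (j : Fin (l + 1)) : f j = j := by
  have hle : ∀ j : Fin (l + 1), f j ≤ j := by
    refine Fin.induction (by simp [h0]) fun j ih => ?_
    have := hstep j
    simp only [Fin.val_succ, Fin.val_castSucc] at ih ⊢
    omega
  have hge : ∀ j : Fin (l + 1), l ≤ f j + (l - j) := by
    refine Fin.reverseInduction (by simp [hlast]) fun j ih => ?_
    have := hstep j
    simp only [Fin.val_succ, Fin.val_castSucc] at ih ⊢
    omega
  have := hle j
  have := hge j
  omega

theorem CoxeterSystem.IsReduced.length_wordProd_take_mul_simple {B W : Type*} [Group W]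
    {M : CoxeterMatrix B} {cs : CoxeterSystem M W} {ω : List B} (hω : cs.IsReduced ω)
    {i : ℕ} (hi : i < ω.length) :
    cs.length (cs.wordProd (ω.take i) * cs.simple ω[i]) =
      cs.length (cs.wordProd (ω.take i)) + 1 := by
  have hlen : ∀ j ≤ ω.length, cs.length (cs.wordProd (ω.take j)) = j := fun j hj => by
    simpa [hj] using (hω.take j).eq
  rw [← cs.wordProd_concat, List.concat_eq_append, ← List.take_succ_eq_append_getElem hi,
    hlen (i + 1) hi, hlen i hi.le]

namespace IsWeylBuilding

variable {C B W : Type*} [Group W] {M : CoxeterMatrix B} {cs : CoxeterSystem M W}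
  {δ : C → C → W}

theorem self_eq_one (hX : IsWeylBuilding cs δ) (c : C) : δ c c = 1 :=
  (hX.eq_one_iff c c).mpr rfl

theorem length_le_add_one_of_adj (hX : IsWeylBuilding cs δ) (x : C) {d e : C} {i : B}
    (hde : δ d e = 1 ∨ δ d e = cs.simple i) :
    cs.length (δ x e) ≤ cs.length (δ x d) + 1 := by
  rcases hde with hde | hde
  · rw [(hX.eq_one_iff d e).mp hde]
    omega
  · rcases hX.step x d e i hde with h | h <;> rw [h]
    · rcases cs.length_mul_simple (δ x d) i with h' | h' <;> omega
    · omega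

theorem weylDist_eq_mul_simple_of_length_eq_add_one (hX : IsWeylBuilding cs δ) (x : C)
    {d e : C} {i : B} (hde : δ d e = 1 ∨ δ d e = cs.simple i)
    (hup : cs.length (δ x e) = cs.length (δ x d) + 1) : δ x e = δ x d * cs.simple i := by
  rcases hde with hde | hde
  · rw [(hX.eq_one_iff d e).mp hde] at hup
    omega
  · refine (hX.step x d e i hde).resolve_right fun h => ?_
    rw [h] at hup
    omega

theorem length_le_of_adj_of_length_eq_add_one (hX : IsWeylBuilding cs δ) (x : C)
    {d d' e : C} {i : B} (hdd' : δ d d' = 1 ∨ δ d d' = cs.simple i)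
    (hup : cs.length (δ x d') = cs.length (δ x d) + 1)
    (hde : δ d e = 1 ∨ δ d e = cs.simple i) : cs.length (δ x d) ≤ cs.length (δ x e) := by
  have hasc : cs.length (δ x d * cs.simple i) = cs.length (δ x d) + 1 := by
    rw [← hX.weylDist_eq_mul_simple_of_length_eq_add_one x hdd' hup, hup]
  rcases hde with hde | hde
  · rw [(hX.eq_one_iff d e).mp hde]
  · rcases hX.step x d e i hde with h | h <;> rw [h]
    omega

theorem weylDist_eq_wordProd_take (hX : IsWeylBuilding cs δ) {l : ℕ} (c : Fin (l + 1) → C)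
    (ι : Fin l → B) (hgal : ∀ j : Fin l, δ (c j.castSucc) (c j.succ) = cs.simple (ι j))
    (htype : cs.IsReduced (List.ofFn ι)) (j : Fin (l + 1)) :
    δ (c 0) (c j) = cs.wordProd ((List.ofFn ι).take j) := by
  induction j using Fin.induction with
  | zero => simp [hX.self_eq_one]
  | succ j ih =>
    have hj : (j : ℕ) < (List.ofFn ι).length := by simp
    have hasc := htype.length_wordProd_take_mul_simple hj
    simp only [List.getElem_ofFn, Fin.eta] at hasc
    rw [hX.step_reduced _ _ _ _ (hgal j) (by rwa [ih]), ih, Fin.val_succ,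
      List.take_succ_eq_append_getElem hj, cs.wordProd_append]
    simp

end IsWeylBuilding

/-- let `γ = (c₀, p₁, c₁, …, p_l, c_l)` be a gallery in a building `X` which has
the type `(i₁, …, i_l)` of a minimal gallery (a reduced word).  Then `γ` is minimal (its
length `l` equals the gallery distance `cs.length (δ (c 0) (c l))` between its extremities)
if and only if for all `1 ≤ j ≤ l` one has `c_{j-1} = gate_{c₀}(p_j)` (i.e. `c_{j-1}` is the
alcove of `star(p_j)` closest to `c₀`) and `c_j ≠ c_{j-1}`. -/
theorem gallery_minimal_iff_gates
    {C B W : Type*} [Group W] {M : CoxeterMatrix B} (cs : CoxeterSystem M W)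
    (δ : C → C → W) (hX : IsWeylBuilding cs δ)
    (l : ℕ) (c : Fin (l + 1) → C) (ι : Fin l → B)
    -- `γ` is a gallery: consecutive alcoves share the panel of type `ι j`
    (hgal : ∀ j : Fin l, δ (c j.castSucc) (c j.succ) = 1 ∨
      δ (c j.castSucc) (c j.succ) = cs.simple (ι j))
    -- `γ` has the type of a minimal gallery
    (htype : cs.IsReduced (List.ofFn ι)) :
    cs.length (δ (c 0) (c (Fin.last l))) = l ↔
      ∀ j : Fin l, c j.succ ≠ c j.castSucc ∧
        ∀ f : C, (δ (c j.castSucc) f = 1 ∨ δ (c j.castSucc) f = cs.simple (ι j)) →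
          cs.length (δ (c 0) (c j.castSucc)) ≤ cs.length (δ (c 0) f) := by
  constructor
  · intro hmin j
    have hlen : ∀ k, cs.length (δ (c 0) (c k)) = k :=
      Fin.apply_eq_val_of_le_add_one (fun k => cs.length (δ (c 0) (c k)))
        (by simp [hX.self_eq_one]) (fun k => hX.length_le_add_one_of_adj (c 0) (hgal k)) hmin
    have hup : cs.length (δ (c 0) (c j.succ)) = cs.length (δ (c 0) (c j.castSucc)) + 1 := by
      simp [hlen]
    refine ⟨fun h => ?_, fun f hf => hX.length_le_of_adj_of_length_eq_add_one _ (hgal j) hup hf⟩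
    rw [h] at hup
    omega
  · intro hgate
    have hstep : ∀ j, δ (c j.castSucc) (c j.succ) = cs.simple (ι j) := fun j =>
      (hgal j).resolve_left fun h => (hgate j).1 ((hX.eq_one_iff _ _).mp h).symm
    rw [hX.weylDist_eq_wordProd_take c ι hstep htype, Fin.val_last,
      List.take_of_length_le (by simp)]
    simpa using htype.eq
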